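/- arXiv:1309.0747 — 2 statements merged into one kernel-verified Lean document; each statement's English description precedes it below -/
import Mathlib

section
/- If a metric space uniformly embeds into a real Hilbert space, then it uniformly embeds into the unit sphere of a real Hilbert space. -/
/-!
Pull the Gaussian kernel `exp (-‖u - v‖²)` back along the given embedding `T : M → H`. It is
positive semidefinite: it factors as `exp (-‖u‖²) exp (2⟪u, v⟫) exp (-‖v‖²)`, and
`exp (2⟪u, v⟫)` is a convergent sum of Hadamard powers of a Gram matrix with nonnegative
coefficients (Schur product theorem). Its reproducing kernel Hilbert space therefore contains
unit vectors `S x` with `⟪S x, S y⟫ = exp (-‖T x - T y‖²)`, so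
`‖S x - S y‖ = √(2 - 2 exp (-‖T x - T y‖²))`. This is a continuous strictly increasing function
of `‖T x - T y‖` vanishing at `0`, so `S` is again a uniform embedding.
-/

open scoped InnerProductSpace Nat ComplexOrder

/-- `T` is a uniform embedding: `T` is injective and both `T` and its inverse on the
image are uniformly continuous. -/
def IsUnifEmb {X Y : Type*} (dX : X → X → ℝ) (dY : Y → Y → ℝ) (T : X → Y) : Prop :=
  Function.Injective T ∧
  (∀ ε > (0 : ℝ), ∃ δ > (0 : ℝ), ∀ x y, dX x y < δ → dY (T x) (T y) < ε) ∧
  (∀ ε > (0 : ℝ), ∃ δ > (0 : ℝ), ∀ x y, dY (T x) (T y) < δ → dX x y < ε)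

universe u

namespace Matrix

variable {ι 𝕜 E : Type*} [RCLike 𝕜]

/-- Unlike `Matrix.posSemidef_gram`, the family of vectors may be infinite. -/
theorem posSemidef_gram' [SeminormedAddCommGroup E] [InnerProductSpace 𝕜 E] (v : ι → E) :
    (gram 𝕜 v).PosSemidef := by
  refine ⟨isHermitian_gram 𝕜 v, fun x => ?_⟩
  have hform : (x.sum fun i a => x.sum fun j b => star a * gram 𝕜 v i j * b) =
      ⟪x.sum fun i a => a • v i, x.sum fun j b => b • v j⟫_𝕜 := by
    simp only [Finsupp.sum, sum_inner, inner_sum, inner_smul_left, inner_smul_right, gram_apply,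
      RCLike.star_def, Finset.mul_sum]
    rw [Finset.sum_comm]
    exact Finset.sum_congr rfl fun i _ => Finset.sum_congr rfl fun j _ => by ring
  rw [hform, RCLike.le_iff_re_im]
  simp

theorem PosSemidef.map_pow {A : Matrix ι ι 𝕜} (hA : A.PosSemidef) (n : ℕ) :
    (A.map (· ^ n)).PosSemidef := by
  induction n with
  | zero =>
    convert posSemidef_gram' (𝕜 := 𝕜) fun _ : ι => (1 : 𝕜) using 1
    ext
    simp
  | succ n ih =>
    convert hA.hadamard ih using 1
    ext i j
    simp [pow_succ']

theorem PosSemidef.map_exp {A : Matrix ι ι ℝ} (hA : A.PosSemidef) :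
    (A.map Real.exp).PosSemidef := by
  refine ⟨hA.isHermitian.map _ fun _ => rfl, fun x => ?_⟩
  have hsum : HasSum
      (fun n : ℕ => x.sum fun i a => x.sum fun j b => star a * (A i j ^ n / n !) * b)
      (x.sum fun i a => x.sum fun j b => star a * Real.exp (A i j) * b) := by
    refine hasSum_sum fun i _ => hasSum_sum fun j _ => (HasSum.mul_left _ ?_).mul_right _
    simpa [Real.exp_eq_exp_ℝ] using NormedSpace.expSeries_div_hasSum_exp (A i j)
  refine hsum.nonneg fun n => ?_
  simpa [div_eq_inv_mul] using ((hA.map_pow n).smul (by positivity : 0 ≤ (n ! : ℝ)⁻¹)).2 x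

theorem posSemidef_exp_neg_norm_sub_sq [SeminormedAddCommGroup E] [InnerProductSpace ℝ E]
    (v : ι → E) : (of fun i j => Real.exp (-‖v i - v j‖ ^ 2)).PosSemidef := by
  have hfactor : (of fun i j => Real.exp (-‖v i - v j‖ ^ 2)) =
      gram ℝ (fun i => Real.exp (-‖v i‖ ^ 2)) ⊙ (2 • gram ℝ v).map Real.exp := by
    ext i j
    simp only [of_apply, hadamard_apply, gram_apply, map_apply, smul_apply, RCLike.inner_apply,
      conj_trivial, nsmul_eq_mul, Nat.cast_ofNat, ← Real.exp_add, norm_sub_sq_real]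
    ring_nf
  rw [hfactor]
  exact (posSemidef_gram' _).hadamard ((posSemidef_gram' v).smul zero_le_two).map_exp

theorem PosSemidef.map_smul_id {X : Type*} {k : Matrix X X ℝ} (hk : k.PosSemidef) :
    (k.map fun c => c • ContinuousLinearMap.id ℝ ℝ).PosSemidef := by
  have hsymm (i j : X) : k j i = k i j := by simpa using hk.isHermitian.apply i j
  have hherm : (k.map fun c => c • ContinuousLinearMap.id ℝ ℝ).IsHermitian := by
    ext i j
    simp [conjTranspose_apply, ContinuousLinearMap.star_eq_adjoint,
      ContinuousLinearMap.adjoint_id, hsymm]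
  have htfae :=
    (RKHS.posSemidef_tfae (K := k.map fun c => c • ContinuousLinearMap.id ℝ ℝ)).out 0 2
  refine htfae.mpr ⟨hherm, fun w => ?_⟩
  simpa [Finsupp.sum, mul_comm, mul_left_comm, hsymm] using hk.2 w

/-- Kolmogorov decomposition of a real positive semidefinite kernel, realised in its
reproducing kernel Hilbert space. -/
theorem PosSemidef.exists_inner_eq {X : Type u} {k : Matrix X X ℝ} (hk : k.PosSemidef) :
    ∃ (H : Type u) (_ : NormedAddCommGroup H) (_ : InnerProductSpace ℝ H)
      (_ : CompleteSpace H) (S : X → H), ∀ x y, ⟪S x, S y⟫_ℝ = k x y := by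
  have : Fact (k.map fun c => c • ContinuousLinearMap.id ℝ ℝ).PosSemidef := ⟨hk.map_smul_id⟩
  refine ⟨RKHS.OfKernel (k.map fun c => c • ContinuousLinearMap.id ℝ ℝ), inferInstance,
    inferInstance, inferInstance, fun x => RKHS.kerFun _ x 1, fun x y => ?_⟩
  rw [← RKHS.kernel_inner]
  simpa using hk.isHermitian.apply x y

end Matrix

theorem norm_sub_eq_sqrt_of_norm_eq_one {E : Type*} [SeminormedAddCommGroup E]
    [InnerProductSpace ℝ E] {a b : E} (ha : ‖a‖ = 1) (hb : ‖b‖ = 1) :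
    ‖a - b‖ = √(2 - 2 * ⟪a, b⟫_ℝ) := by
  rw [← Real.sqrt_sq (norm_nonneg _), norm_sub_sq_real, ha, hb]
  ring_nf

open Set in
theorem IsUnifEmb.of_dist_eq_comp {X Y Z : Type*} [PseudoMetricSpace X] [MetricSpace Y]
    [PseudoMetricSpace Z] {T : X → Y} {S : X → Z} {ρ : ℝ → ℝ}
    (hT : IsUnifEmb (fun x y => dist x y) (fun u v => dist u v) T)
    (hρ : StrictMonoOn ρ (Ici 0)) (hρ_cont : ContinuousWithinAt ρ (Ici 0) 0) (hρ_zero : ρ 0 = 0)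
    (hS : ∀ x y, dist (S x) (S y) = ρ (dist (T x) (T y))) :
    IsUnifEmb (fun x y => dist x y) (fun u v => dist u v) S := by
  obtain ⟨hT_inj, hT_unif, hT_inv⟩ := hT
  refine ⟨fun x y hxy => hT_inj ?_, fun ε hε => ?_, fun ε hε => ?_⟩
  · have h0 : ρ (dist (T x) (T y)) = ρ 0 := by rw [← hS, hxy, dist_self, hρ_zero]
    exact dist_eq_zero.mp (hρ.injOn dist_nonneg self_mem_Ici h0)
  · obtain ⟨η, hη, hρη⟩ := Metric.continuousWithinAt_iff.mp hρ_cont ε hε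
    obtain ⟨δ, hδ, hTδ⟩ := hT_unif η hη
    refine ⟨δ, hδ, fun x y hxy => ?_⟩
    have hlt := hρη (mem_Ici.mpr dist_nonneg) (by simpa using hTδ x y hxy)
    rw [Real.dist_eq, hρ_zero, sub_zero] at hlt
    show dist (S x) (S y) < ε
    exact hS x y ▸ (le_abs_self _).trans_lt hlt
  · obtain ⟨δ, hδ, hTδ⟩ := hT_inv ε hε
    refine ⟨ρ δ, hρ_zero ▸ (hρ.lt_iff_lt self_mem_Ici hδ.le).mpr hδ, fun x y hxy => hTδ x y ?_⟩
    change dist (S x) (S y) < ρ δ at hxy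
    rwa [hS, hρ.lt_iff_lt dist_nonneg hδ.le] at hxy

/-- The distance between unit vectors whose inner product is `exp (-t²)`. -/
noncomputable def gaussianChord (t : ℝ) : ℝ := √(2 - 2 * Real.exp (-t ^ 2))

theorem strictMonoOn_gaussianChord : StrictMonoOn gaussianChord (Set.Ici 0) := by
  intro s hs t ht hst
  have hexp : Real.exp (-t ^ 2) < Real.exp (-s ^ 2) :=
    Real.exp_lt_exp.mpr (neg_lt_neg (pow_lt_pow_left₀ hst hs two_ne_zero))
  have hle : Real.exp (-s ^ 2) ≤ 1 := Real.exp_le_one_iff.mpr (by nlinarith)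
  exact Real.sqrt_lt_sqrt (by linarith) (by linarith)

theorem continuous_gaussianChord : Continuous gaussianChord := by
  unfold gaussianChord
  fun_prop

theorem gaussianChord_zero : gaussianChord 0 = 0 := by
  simp [gaussianChord]

/-- If a metric space uniformly embeds into a real Hilbert space, then it uniformly embeds
into the unit sphere of a real Hilbert space. -/
theorem unifEmb_hilbert_implies_unifEmb_sphere
    (M : Type u) [MetricSpace M]
    (h : ∃ (H : Type u) (_ : NormedAddCommGroup H) (_ : InnerProductSpace ℝ H)
      (_ : CompleteSpace H) (T : M → H),
      IsUnifEmb (fun x y => dist x y) (fun u v => dist u v) T) :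
    ∃ (H' : Type u) (_ : NormedAddCommGroup H') (_ : InnerProductSpace ℝ H')
      (_ : CompleteSpace H') (T : M → H'),
      (∀ x, ‖T x‖ = 1) ∧
      IsUnifEmb (fun x y => dist x y) (fun u v => dist u v) T := by
  obtain ⟨H, _, _, _, T, hT⟩ := h
  obtain ⟨H', _, _, _, S, hS⟩ := (Matrix.posSemidef_exp_neg_norm_sub_sq T).exists_inner_eq
  have hnorm (x : M) : ‖S x‖ = 1 := by
    rw [norm_eq_sqrt_real_inner, hS]
    simp
  refine ⟨H', inferInstance, inferInstance, inferInstance, S, hnorm, hT.of_dist_eq_comp strictMonoOn_gaussianChord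
    continuous_gaussianChord.continuousWithinAt gaussianChord_zero fun x y => ?_⟩
  rw [dist_eq_norm, dist_eq_norm, norm_sub_eq_sqrt_of_norm_eq_one (hnorm x) (hnorm y), hS]
  rfl
end

section
/- Let M be a metric space. Suppose there exists δ > 0 such that for every R > 0 and every ε > 0 there exist a real Hilbert space H and a mapping T : M → S_H into its unit sphere satisfying ω_T(R) ≤ ε and sup_{t>0} φ_T(t) ≥ δ. Then M coarsely embeds into a real Hilbert space. -/
/-- `T` is a coarse embedding between the "metric spaces" given by distance
functions `dX`, `dY`. -/
def IsCoarseEmb {X Y : Type*} (dX : X → X → ℝ) (dY : Y → Y → ℝ) (T : X → Y) : Prop :=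
  ∃ ρ₁ ρ₂ : ℝ → ℝ,
    MonotoneOn ρ₁ (Set.Ici 0) ∧ MonotoneOn ρ₂ (Set.Ici 0) ∧
    (∀ t, 0 ≤ t → 0 ≤ ρ₁ t) ∧ (∀ t, 0 ≤ t → 0 ≤ ρ₂ t) ∧
    Filter.Tendsto ρ₁ Filter.atTop Filter.atTop ∧
    ∀ x y, ρ₁ (dX x y) ≤ dY (T x) (T y) ∧ dY (T x) (T y) ≤ ρ₂ (dX x y)

universe u

/-!
Choose `T n` with `ω_{T n}(n + 1) ≤ 2⁻ⁿ` and a threshold `t n` beyond which `T n` separates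
points by at least `δ / 2`, and send `x` to `(T n x - T n x₀)ₙ` in the `ℓ²`-sum of the
Hilbert spaces. The squared distance of the images of `x, y` is `∑ ‖T n x - T n y‖²`: its terms
are at most `4` for the `⌈d(x, y)⌉` scales `n < d(x, y)` and at most `4⁻ⁿ` afterwards, so it is
`O(d(x, y))`; every scale with `t n ≤ d(x, y)` contributes at least `δ² / 4`, and the number of
such scales tends to infinity with `d(x, y)`.
-/

open Filter Finset

theorem isCoarseEmb_of_sq_le {X Y : Type*} {dX : X → X → ℝ} {dY : Y → Y → ℝ} {T : X → Y}
    (g f : ℝ → ℝ) (hg : MonotoneOn g (Set.Ici 0)) (hf : MonotoneOn f (Set.Ici 0))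
    (hg_top : Tendsto g atTop atTop) (hdY : ∀ x y, 0 ≤ dY (T x) (T y))
    (hlow : ∀ x y, g (dX x y) ≤ dY (T x) (T y) ^ 2)
    (hup : ∀ x y, dY (T x) (T y) ^ 2 ≤ f (dX x y)) :
    IsCoarseEmb dX dY T := by
  refine ⟨fun t => √(g t), fun t => √(f t), ?_, ?_, fun _ _ => Real.sqrt_nonneg _,
    fun _ _ => Real.sqrt_nonneg _, Real.tendsto_sqrt_atTop.comp hg_top, fun x y => ⟨?_, ?_⟩⟩
  · exact fun a ha b hb hab => Real.sqrt_le_sqrt (hg ha hb hab)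
  · exact fun a ha b hb hab => Real.sqrt_le_sqrt (hf ha hb hab)
  · exact Real.sqrt_le_iff.2 ⟨hdY x y, hlow x y⟩
  · exact Real.le_sqrt_of_sq_le (hup x y)

theorem summable_and_tsum_le_of_le_geometric {a : ℕ → ℝ} {B r : ℝ} {N : ℕ}
    (ha : ∀ n, 0 ≤ a n) (hB : ∀ n, a n ≤ B) (hr₀ : 0 ≤ r) (hr₁ : r < 1)
    (htail : ∀ n, N ≤ n → a n ≤ r ^ n) :
    Summable a ∧ ∑' n, a n ≤ N * B + (1 - r)⁻¹ := by
  set b : ℕ → ℝ := fun n => Set.indicator (Set.Iio N) (fun _ => B) n + r ^ n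
  have hab : ∀ n, a n ≤ b n := fun n => by
    by_cases hn : n < N
    · simpa [b, hn] using le_add_of_le_of_nonneg (hB n) (pow_nonneg hr₀ n)
    · simp [b, hn, htail n (not_lt.1 hn)]
  have hsum_ind : HasSum (Set.indicator (Set.Iio N) fun _ => B) (N * B) := by
    have h : HasSum (Set.indicator (Set.Iio N) fun _ => B)
        (∑ n ∈ range N, Set.indicator (Set.Iio N) (fun _ => B) n) :=
      hasSum_sum_of_ne_finset_zero fun n hn => Set.indicator_of_notMem (by simpa using hn) _
    rwa [sum_congr rfl fun n hn => Set.indicator_of_mem (by simpa using hn) _, sum_const,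
      card_range, nsmul_eq_mul] at h
  have hb : HasSum b (N * B + (1 - r)⁻¹) :=
    hsum_ind.add (hasSum_geometric_of_lt_one hr₀ hr₁)
  have ha_sum : Summable a := hb.summable.of_nonneg_of_le ha hab
  exact ⟨ha_sum, hb.tsum_eq ▸ ha_sum.tsum_le_tsum hab hb.summable⟩

theorem exists_lp_hasSum_dist_rpow {ι M : Type*} {E : ι → Type*}
    [∀ i, NormedAddCommGroup (E i)] {p : ENNReal} [Fact (1 ≤ p)] (hp : 0 < p.toReal)
    (T : ∀ i, M → E i)
    (hT : ∀ x y, Summable fun i => dist (T i x) (T i y) ^ p.toReal) :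
    ∃ F : M → lp E p, ∀ x y,
      HasSum (fun i => dist (T i x) (T i y) ^ p.toReal) (dist (F x) (F y) ^ p.toReal) := by
  rcases isEmpty_or_nonempty M with hM | ⟨⟨x₀⟩⟩
  · exact ⟨isEmptyElim, isEmptyElim⟩
  have hmem : ∀ x, Memℓp (fun i => T i x - T i x₀) p := fun x =>
    memℓp_gen_iff hp |>.2 (by simpa only [dist_eq_norm] using hT x x₀)
  refine ⟨fun x => ⟨_, hmem x⟩, fun x y => ?_⟩
  have h := lp.hasSum_norm hp (⟨_, hmem x⟩ - ⟨_, hmem y⟩ : lp E p)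
  simp only [lp.coeFn_sub, Pi.sub_apply, sub_sub_sub_cancel_right] at h
  simpa only [dist_eq_norm] using h

noncomputable def indicesBelow (t : ℕ → ℝ) (r : ℝ) : Finset ℕ :=
  {n ∈ range ⌈r⌉₊ | t n ≤ r}

theorem indicesBelow_mono (t : ℕ → ℝ) : Monotone (indicesBelow t) := by
  intro r r' hr n hn
  simp only [indicesBelow, mem_filter, mem_range] at hn ⊢
  exact ⟨hn.1.trans_le (Nat.ceil_mono hr), hn.2.trans hr⟩

theorem le_of_mem_indicesBelow {t : ℕ → ℝ} {r : ℝ} {n : ℕ} (hn : n ∈ indicesBelow t r) :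
    t n ≤ r :=
  (mem_filter.1 hn).2

theorem tendsto_card_indicesBelow (t : ℕ → ℝ) :
    Tendsto (fun r => #(indicesBelow t r)) atTop atTop := by
  refine tendsto_atTop_atTop.2 fun K => ⟨max (partialSups t K) K, fun r hr => ?_⟩
  have hsub : range K ⊆ indicesBelow t r := fun n hn => by
    have hnK := mem_range.1 hn
    have hK : (K : ℝ) ≤ r := (le_max_right _ _).trans hr
    simp only [indicesBelow, mem_filter, mem_range]
    exact ⟨Nat.lt_ceil.2 ((Nat.cast_lt.2 hnK).trans_le hK),
      (le_partialSups_of_le t hnK.le).trans ((le_max_left _ _).trans hr)⟩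
  simpa using card_le_card hsub

theorem mul_card_indicesBelow_le_tsum {t a : ℕ → ℝ} {c r : ℝ} (ha : Summable a)
    (ha₀ : ∀ n, 0 ≤ a n) (hc : ∀ n, t n ≤ r → c ≤ a n) :
    c * #(indicesBelow t r) ≤ ∑' n, a n :=
  calc c * #(indicesBelow t r) = ∑ _n ∈ indicesBelow t r, c := by
        rw [sum_const, nsmul_eq_mul, mul_comm]
    _ ≤ ∑ n ∈ indicesBelow t r, a n := sum_le_sum fun n hn => hc n (le_of_mem_indicesBelow hn)
    _ ≤ ∑' n, a n := ha.sum_le_tsum _ fun n _ => ha₀ n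

theorem summable_and_tsum_dist_sq_le {M : Type*} [PseudoMetricSpace M] {H : ℕ → Type*}
    [∀ n, SeminormedAddCommGroup (H n)] (T : ∀ n, M → H n) (hunit : ∀ n x, ‖T n x‖ = 1)
    (hclose : ∀ (n : ℕ) x y, dist x y ≤ n + 1 → dist (T n x) (T n y) ≤ (1 / 2) ^ n) (x y : M) :
    Summable (fun n => dist (T n x) (T n y) ^ 2) ∧
      ∑' n, dist (T n x) (T n y) ^ 2 ≤ 4 * dist x y + 6 := by
  have hbound (n : ℕ) : dist (T n x) (T n y) ^ 2 ≤ 2 ^ 2 := by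
    have := dist_le_norm_add_norm (T n x) (T n y)
    rw [hunit, hunit] at this
    exact pow_le_pow_left₀ dist_nonneg (by linarith) 2
  have htail (n : ℕ) (hn : ⌈dist x y⌉₊ ≤ n) : dist (T n x) (T n y) ^ 2 ≤ ((1 / 2) ^ 2) ^ n := by
    have hd : dist x y ≤ n + 1 := (Nat.ceil_le.1 hn).trans (by linarith)
    calc dist (T n x) (T n y) ^ 2 ≤ ((1 / 2) ^ n) ^ 2 :=
          pow_le_pow_left₀ dist_nonneg (hclose n x y hd) 2
      _ = ((1 / 2) ^ 2) ^ n := pow_right_comm _ _ _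
  obtain ⟨hs, hle⟩ := summable_and_tsum_le_of_le_geometric (fun n => sq_nonneg _) hbound
    (by norm_num) (by norm_num) htail
  refine ⟨hs, hle.trans ?_⟩
  rw [show (1 - (1 / 2 : ℝ) ^ 2)⁻¹ = 4 / 3 by norm_num]
  linarith [Nat.ceil_lt_add_one (dist_nonneg (x := x) (y := y))]

/-- Dadarlat–Guentner: Let `M` be a metric space. Suppose there is `δ > 0` such that for all
`R > 0` and `ε > 0` there are a real Hilbert space `H` and a map `T : M → S_H` into its unit
sphere with `ω_T R ≤ ε` (i.e. `dist (T x) (T y) ≤ ε` whenever `dist x y ≤ R`) and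
`sup_{t > 0} φ_T t ≥ δ` (i.e. for every `c < δ` there is `t > 0` such that
`dist (T x) (T y) ≥ c` whenever `dist x y ≥ t`). Then `M` coarsely embeds into a real
Hilbert space. -/
theorem coarse_embedding_of_sphere_maps
    (M : Type u) [MetricSpace M]
    (h : ∃ δ > (0 : ℝ), ∀ R > (0 : ℝ), ∀ ε > (0 : ℝ),
      ∃ (H : Type u) (_ : NormedAddCommGroup H) (_ : InnerProductSpace ℝ H)
        (_ : CompleteSpace H) (T : M → H),
        (∀ x, ‖T x‖ = 1) ∧
        (∀ x y, dist x y ≤ R → dist (T x) (T y) ≤ ε) ∧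
        (∀ c < δ, ∃ t > (0 : ℝ), ∀ x y, t ≤ dist x y → c ≤ dist (T x) (T y))) :
    ∃ (H : Type u) (_ : NormedAddCommGroup H) (_ : InnerProductSpace ℝ H)
      (_ : CompleteSpace H) (T : M → H),
      IsCoarseEmb (fun x y => dist x y) (fun u v => dist u v) T := by
  obtain ⟨δ, hδ, hT⟩ := h
  choose H _ _ _ T hunit hclose hfar using fun n : ℕ =>
    hT (n + 1) n.cast_add_one_pos ((1 / 2) ^ n) (by positivity)
  choose t hsep using fun n => (hfar n (δ / 2) (half_lt_self hδ)).imp fun _ => And.right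
  have hup := summable_and_tsum_dist_sq_le T hunit hclose
  obtain ⟨F, hF⟩ := exists_lp_hasSum_dist_rpow (p := 2) (by norm_num) T
    (by simpa using fun x y => (hup x y).1)
  simp only [ENNReal.toReal_ofNat, Real.rpow_two] at hF
  refine ⟨lp H 2, inferInstance, inferInstance, inferInstance, F,
    isCoarseEmb_of_sq_le (fun r => (δ / 2) ^ 2 * #(indicesBelow t r)) (fun r => 4 * r + 6)
      ?_ ?_ ?_ (fun _ _ => dist_nonneg) (fun x y => ?_) (fun x y => ?_)⟩
  · exact fun a _ b _ hab => mul_le_mul_of_nonneg_left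
      (Nat.cast_le.2 (card_le_card (indicesBelow_mono t hab))) (by positivity)
  · exact fun a _ b _ hab => by linarith
  · exact (tendsto_natCast_atTop_atTop.comp (tendsto_card_indicesBelow t)).const_mul_atTop
      (by positivity)
  · rw [← (hF x y).tsum_eq]
    exact mul_card_indicesBelow_le_tsum (hup x y).1 (fun _ => sq_nonneg _)
      fun n hn => pow_le_pow_left₀ (half_pos hδ).le (hsep n x y hn) 2
  · exact (hF x y).tsum_eq ▸ (hup x y).2
end
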